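/- In the free group F_5, the four commutators [λ_{1,5},λ_{3,2}], [λ_{1,5},λ_{4,2}], [λ_{1,5},λ_{4,3}], [λ_{2,5},λ_{4,3}] all lie in the normal closure of the set {S_i(λ_{1,4}λ_{3,2}λ_{1,4}^{-1}λ_{3,2}^{-1}) : i = 0,1,2,3} ∪ CR(4), where S_i : F_4 → F_5 and CR(4) ⊆ F_5 via the canonical inclusion F_4 → F_5. -/

import Mathlib

/-- The ambient free group with generators `λ i j` indexed by ordered pairs of naturals;
the sub-free-group `F_m` is spanned by the generators `lam i j` with `1 ≤ i ≠ j ≤ m`,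
and the canonical inclusion `F_m → F_{m'}` is the identity on generators. -/
abbrev FG : Type := FreeGroup (ℕ × ℕ)

/-- The generator `λ_{i,j}`. -/
def lam (i j : ℕ) : FG := FreeGroup.of (i, j)

/-- The commutativity relators `λ_{i,j} λ_{k,l} λ_{i,j}⁻¹ λ_{k,l}⁻¹` of `VP_m`,
for pairwise distinct indices `1 ≤ i, j, k, l ≤ m`. -/
def CR (m : ℕ) : Set FG :=
  {w | ∃ i j k l : ℕ,
    1 ≤ i ∧ i ≤ m ∧ 1 ≤ j ∧ j ≤ m ∧ 1 ≤ k ∧ k ≤ m ∧ 1 ≤ l ∧ l ≤ m ∧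
    i ≠ j ∧ i ≠ k ∧ i ≠ l ∧ j ≠ k ∧ j ≠ l ∧ k ≠ l ∧
    w = lam i j * lam k l * (lam i j)⁻¹ * (lam k l)⁻¹}

/-- The long relators `λ_{k,i} λ_{k,j} λ_{i,j} λ_{k,i}⁻¹ λ_{k,j}⁻¹ λ_{i,j}⁻¹` of `VP_m`,
for pairwise distinct indices `1 ≤ i, j, k ≤ m`. -/
def LongR (m : ℕ) : Set FG :=
  {w | ∃ i j k : ℕ,
    1 ≤ i ∧ i ≤ m ∧ 1 ≤ j ∧ j ≤ m ∧ 1 ≤ k ∧ k ≤ m ∧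
    i ≠ j ∧ i ≠ k ∧ j ≠ k ∧
    w = lam k i * lam k j * lam i j * (lam k i)⁻¹ * (lam k j)⁻¹ * (lam i j)⁻¹}

/-- The full relator set `R^V(m)` of the virtual pure braid group `VP_m`. -/
def RV (m : ℕ) : Set FG := CR m ∪ LongR m

/-- Value of `S_{i-1}` on a generator, given by the displayed case formulas:
for `k < l`, `S_{i-1}(λ_{k,l})` and `S_{i-1}(λ_{l,k})` according to the position of `i`
relative to `k` and `l`. -/
def Sgen (i : ℕ) (p : ℕ × ℕ) : FG :=
  if p.1 < p.2 then
    -- the generator is `λ_{k,l}` with `k = p.1 < l = p.2`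
    if i < p.1 then lam (p.1 + 1) (p.2 + 1)
    else if i = p.1 then lam p.1 (p.2 + 1) * lam (p.1 + 1) (p.2 + 1)
    else if i < p.2 then lam p.1 (p.2 + 1)
    else if i = p.2 then lam p.1 (p.2 + 1) * lam p.1 p.2
    else lam p.1 p.2
  else if p.2 < p.1 then
    -- the generator is `λ_{l,k}` with `k = p.2 < l = p.1`
    if i < p.2 then lam (p.1 + 1) (p.2 + 1)
    else if i = p.2 then lam (p.1 + 1) (p.2 + 1) * lam (p.1 + 1) p.2
    else if i < p.1 then lam (p.1 + 1) p.2
    else if i = p.1 then lam p.1 p.2 * lam (p.1 + 1) p.2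
    else lam p.1 p.2
  else lam p.1 p.2

/-- The free-group homomorphism `S_t = S_{(t+1)-1} : F_m → F_{m+1}` (doubling the
`(t+1)`-st strand), determined on generators by the displayed case formulas. -/
def Smap (t : ℕ) : FG →* FG := FreeGroup.lift (Sgen (t + 1))

/-- The relator `u * v⁻¹` of a relation `u = v`. -/
def relOf (u v : FG) : FG := u * v⁻¹

/-- The set `R_{i,j,k}` of the six long relators with indices in `{i, j, k}`. -/
def Rtriple (i j k : ℕ) : Set FG :=
  {relOf (lam i j * lam i k * lam j k) (lam j k * lam i k * lam i j),
   relOf (lam j i * lam j k * lam i k) (lam i k * lam j k * lam j i),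
   relOf (lam i k * lam i j * lam k j) (lam k j * lam i j * lam i k),
   relOf (lam k i * lam k j * lam i j) (lam i j * lam k j * lam k i),
   relOf (lam j k * lam j i * lam k i) (lam k i * lam j i * lam j k),
   relOf (lam k j * lam k i * lam j i) (lam j i * lam k i * lam k j)}

/-- The commutator `[a,b] = a⁻¹ b⁻¹ a b`. -/
def commE (a b : FG) : FG := a⁻¹ * b⁻¹ * a * b

/-- The automorphism of the free group induced by a permutation of the indices:
`λ_{i,j} ↦ λ_{σ(i),σ(j)}`. -/
def permF (σ : Equiv.Perm ℕ) : FG →* FG :=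
  FreeGroup.lift (fun p => lam (σ p.1) (σ p.2))

/-- The relator `λ_{1,4} λ_{3,2} λ_{1,4}⁻¹ λ_{3,2}⁻¹` of `F_4`. -/
def r9 : FG := lam 1 4 * lam 3 2 * (lam 1 4)⁻¹ * (lam 3 2)⁻¹

/-- The normal closure in `F_5` of `{S_i(λ_{1,4}λ_{3,2}λ_{1,4}⁻¹λ_{3,2}⁻¹) : i = 0,1,2,3} ∪ CR(4)`. -/
def N9 : Subgroup FG :=
  Subgroup.normalClosure ({Smap 0 r9, Smap 1 r9, Smap 2 r9, Smap 3 r9} ∪ CR 4)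

/-!
Doubling a strand turns the relator `r9 = ⁅λ₁₄, λ₃₂⁆` into a commutator one of whose entries is a
product of two generators, e.g. `S₃ r9 = ⁅λ₁₅ λ₁₄, λ₃₂⁆`. Modulo `N9`, starting from the commutation
of `λ₁₄` with `λ₃₂` given by `CR 4`, each lift lets one cancel a factor already known to commute
with the other entry; this yields in turn that `λ₁₅` commutes with `λ₃₂`, `λ₄₂`, `λ₄₃`, and then
that `λ₂₅` commutes with `λ₄₃`.
-/

open scoped commutatorElement

lemma commutatorElement_mem_iff_commute {G : Type*} [Group G] (N : Subgroup G) [N.Normal]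
    (a b : G) : ⁅a, b⁆ ∈ N ↔ Commute (a : G ⧸ N) b := by
  rw [← QuotientGroup.eq_one_iff, ← QuotientGroup.mk'_apply, map_commutatorElement,
    commutatorElement_eq_one_iff_commute]
  rfl

lemma commE_eq_commutatorElement (a b : FG) : commE a b = ⁅a⁻¹, b⁻¹⁆ := by
  simp only [commE, commutatorElement_def, inv_inv]

lemma Smap_lam (t i j : ℕ) : Smap t (lam i j) = Sgen (t + 1) (i, j) :=
  FreeGroup.lift_apply_of

lemma r9_eq_commutatorElement : r9 = ⁅lam 1 4, lam 3 2⁆ := rfl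

lemma Smap_zero_r9 : Smap 0 r9 = ⁅lam 1 5 * lam 2 5, lam 4 3⁆ := by
  simp [r9, Smap_lam, Sgen, commutatorElement_def]

lemma Smap_one_r9 : Smap 1 r9 = ⁅lam 1 5, lam 4 3 * lam 4 2⁆ := by
  simp [r9, Smap_lam, Sgen, commutatorElement_def]

lemma Smap_two_r9 : Smap 2 r9 = ⁅lam 1 5, lam 3 2 * lam 4 2⁆ := by
  simp [r9, Smap_lam, Sgen, commutatorElement_def]

lemma Smap_three_r9 : Smap 3 r9 = ⁅lam 1 5 * lam 1 4, lam 3 2⁆ := by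
  simp [r9, Smap_lam, Sgen, commutatorElement_def]

lemma r9_mem_N9 : r9 ∈ N9 :=
  Subgroup.subset_normalClosure (Or.inr ⟨1, 4, 3, 2, by norm_num [r9]⟩)

lemma Smap_r9_mem_N9 (t : ℕ) (ht : t ≤ 3) : Smap t r9 ∈ N9 :=
  Subgroup.subset_normalClosure (Or.inl (by interval_cases t <;> simp))

theorem comms_from_lifting_14_32 :
    commE (lam 1 5) (lam 3 2) ∈ N9 ∧ commE (lam 1 5) (lam 4 2) ∈ N9 ∧
    commE (lam 1 5) (lam 4 3) ∈ N9 ∧ commE (lam 2 5) (lam 4 3) ∈ N9 := by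
  have : N9.Normal := Subgroup.normalClosure_normal
  have rel {x a b : FG} (hx : x ∈ N9) (e : x = ⁅a, b⁆) : Commute (a : FG ⧸ N9) b :=
    (commutatorElement_mem_iff_commute N9 a b).1 (e ▸ hx)
  have h14_32 := rel r9_mem_N9 r9_eq_commutatorElement
  have hS0 := rel (Smap_r9_mem_N9 0 (by norm_num)) Smap_zero_r9
  have hS1 := rel (Smap_r9_mem_N9 1 (by norm_num)) Smap_one_r9
  have hS2 := rel (Smap_r9_mem_N9 2 (by norm_num)) Smap_two_r9
  have hS3 := rel (Smap_r9_mem_N9 3 le_rfl) Smap_three_r9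
  simp only [QuotientGroup.mk_mul] at hS0 hS1 hS2 hS3
  have h15_32 : Commute (lam 1 5 : FG ⧸ N9) (lam 3 2) := by
    simpa using hS3.mul_left h14_32.inv_left
  have h15_42 : Commute (lam 1 5 : FG ⧸ N9) (lam 4 2) := by
    simpa using h15_32.inv_right.mul_right hS2
  have h15_43 : Commute (lam 1 5 : FG ⧸ N9) (lam 4 3) := by
    simpa using hS1.mul_right h15_42.inv_right
  have h25_43 : Commute (lam 2 5 : FG ⧸ N9) (lam 4 3) := by
    simpa using h15_43.inv_left.mul_left hS0
  simp only [commE_eq_commutatorElement, commutatorElement_mem_iff_commute, QuotientGroup.mk_inv,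
    Commute.inv_inv_iff]
  exact ⟨h15_32, h15_42, h15_43, h25_43⟩
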